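/- Let B ∈ R^{d_x × n̄}, Y ∈ R^{d_y × n̄}, and consider L(W₁,...,W_{H+1}) = (1/m)‖W_{H+1}⋯W₁ B − Y‖_F² − L̃, where L̃ is the global infimum of (1/m)‖W B − Y‖_F² over W ∈ R^{d_y × d_x} and m = n̄ d_y. If d₁ ≥ d₂ ≥ ⋯ ≥ d_{H+1} = d_y and each W_ℓ (2 ≤ ℓ ≤ H+1) is full rank, then ‖∇_{W₁} L(W)‖_F² ≥ (4/m)·σ_min²(W₂ᵀW₃ᵀ⋯W_{H+1}ᵀ)·σ_small²(B)·L(W), where σ_small(B) is the smallest nonzero singular value of B. -/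

import Mathlib

open Matrix

/-- Product `W (n-1) * ⋯ * W 0` of a chain of matrices with compatible dimensions. -/
def chainProd (d : ℕ → ℕ) (W : ∀ ℓ, Matrix (Fin (d (ℓ + 1))) (Fin (d ℓ)) ℝ) :
    (n : ℕ) → Matrix (Fin (d n)) (Fin (d 0)) ℝ
  | 0 => 1
  | n + 1 => W n * chainProd d W n

/-- Product `W n * ⋯ * W 1` (omitting the first factor `W 0`). -/
def prodFrom1 (d : ℕ → ℕ) (W : ∀ ℓ, Matrix (Fin (d (ℓ + 1))) (Fin (d ℓ)) ℝ) :
    (n : ℕ) → Matrix (Fin (d (n + 1))) (Fin (d 1)) ℝ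
  | 0 => (1 : Matrix (Fin (d 1)) (Fin (d 1)) ℝ)
  | n + 1 => W (n + 1) * prodFrom1 d W n

/-- Squared Frobenius norm. -/
noncomputable def frobSq {m n : ℕ} (A : Matrix (Fin m) (Fin n) ℝ) : ℝ :=
  ∑ i, ∑ j, (A i j) ^ 2

/-- Squared smallest singular value of the tall matrix `W₂ᵀ⋯W_{H+1}ᵀ = (W_{H+1}⋯W₂)ᵀ`,
i.e. the smallest eigenvalue of `(W_{H+1}⋯W₂)(W_{H+1}⋯W₂)ᵀ`. -/
noncomputable def sigmaMinSqProd (d : ℕ → ℕ) (W : ∀ ℓ, Matrix (Fin (d (ℓ + 1))) (Fin (d ℓ)) ℝ)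
    (H : ℕ) : ℝ :=
  sInf (Set.range (Matrix.isHermitian_mul_conjTranspose_self (prodFrom1 d W H)).eigenvalues)

/-- Squared smallest nonzero singular value of `B`. -/
noncomputable def sigmaSmallSq {m n : ℕ} (B : Matrix (Fin m) (Fin n) ℝ) : ℝ :=
  sInf {t : ℝ | (∃ i, t = (show (Bᵀ * B).IsHermitian by
    simpa using Matrix.isHermitian_conjTranspose_mul_self B).eigenvalues i) ∧ t ≠ 0}

/-!
Let `E = W_{H+1}⋯W₁B - Y` and let `P` be the orthogonal projection onto the row space of `B`,
the spectral projection of `BᵀB` onto its nonzero eigenvalues. Since `BP = B`, the residual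
`(W'B - Y)(1 - P) = -Y(1 - P)` is the same for every `W'`, so by Pythagoras the excess loss
`‖E‖² - inf_{W'} ‖W'B - Y‖²` is at most `‖EP‖²`. Diagonalising `BᵀB` gives
`σ_small²(B) ‖EP‖² ≤ ‖EBᵀ‖²`, and the Rayleigh bound for `RRᵀ`, `R = W_{H+1}⋯W₂`, gives
`σ_min² ‖EBᵀ‖² ≤ ‖RᵀEBᵀ‖²`, which is `(m/2)²` times the squared norm of the gradient.
-/

lemma frobSq_nonneg {m n : ℕ} (A : Matrix (Fin m) (Fin n) ℝ) : 0 ≤ frobSq A := by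
  unfold frobSq; positivity

lemma frobSq_smul {m n : ℕ} (c : ℝ) (A : Matrix (Fin m) (Fin n) ℝ) :
    frobSq (c • A) = c ^ 2 * frobSq A := by
  simp [frobSq, Finset.mul_sum, mul_pow]

lemma frobSq_transpose {m n : ℕ} (A : Matrix (Fin m) (Fin n) ℝ) : frobSq Aᵀ = frobSq A :=
  Finset.sum_comm

lemma frobSq_eq_trace_mul_transpose {m n : ℕ} (A : Matrix (Fin m) (Fin n) ℝ) :
    frobSq A = (A * Aᵀ).trace := by
  simp [frobSq, Matrix.trace, Matrix.mul_apply, sq]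

lemma frobSq_mul_of_mul_transpose_eq_one {m n : ℕ} {U : Matrix (Fin n) (Fin n) ℝ}
    (hU : U * Uᵀ = 1) (M : Matrix (Fin m) (Fin n) ℝ) : frobSq (M * U) = frobSq M := by
  rw [frobSq_eq_trace_mul_transpose, frobSq_eq_trace_mul_transpose, transpose_mul,
    Matrix.mul_assoc, ← Matrix.mul_assoc U, hU, Matrix.one_mul]

lemma trace_mul_conj_diagonal_mul_transpose {r k l : ℕ} (M : Matrix (Fin r) (Fin k) ℝ)
    (U : Matrix (Fin k) (Fin l) ℝ) (f : Fin l → ℝ) :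
    (M * (U * diagonal f * Uᵀ) * Mᵀ).trace = ∑ i, ∑ j, f j * (M * U) i j ^ 2 := by
  rw [show M * (U * diagonal f * Uᵀ) * Mᵀ = M * U * diagonal f * (M * U)ᵀ by
    simp only [transpose_mul, Matrix.mul_assoc]]
  simp only [Matrix.trace, diag_apply, mul_apply, diagonal_apply, mul_ite, mul_zero,
    Finset.sum_ite_eq', Finset.mem_univ, if_true, transpose_apply]
  refine Finset.sum_congr rfl fun i _ => Finset.sum_congr rfl fun j _ => by ring

lemma frobSq_eq_frobSq_mul_add_frobSq_sub_mul {m n : ℕ} {P : Matrix (Fin n) (Fin n) ℝ}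
    (hPt : Pᵀ = P) (hPP : P * P = P) (M : Matrix (Fin m) (Fin n) ℝ) :
    frobSq M = frobSq (M * P) + frobSq (M - M * P) := by
  have hPP' : ∀ {q} (X : Matrix (Fin n) (Fin q) ℝ), P * (P * X) = P * X := fun X => by
    rw [← Matrix.mul_assoc, hPP]
  simp only [frobSq_eq_trace_mul_transpose, transpose_sub, transpose_mul, hPt, Matrix.sub_mul,
    Matrix.mul_sub, Matrix.mul_assoc, hPP', trace_sub]
  ring

namespace Matrix.IsHermitian

variable {k : ℕ} {S : Matrix (Fin k) (Fin k) ℝ} (hS : S.IsHermitian)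

lemma eigenvectorUnitary_mul_transpose :
    (hS.eigenvectorUnitary : Matrix (Fin k) (Fin k) ℝ) * (↑hS.eigenvectorUnitary)ᵀ = 1 := by
  simpa [star_eq_conjTranspose, conjTranspose_eq_transpose_of_trivial] using
    Unitary.mul_star_self_of_mem hS.eigenvectorUnitary.2

lemma transpose_eigenvectorUnitary_mul :
    (↑hS.eigenvectorUnitary)ᵀ * (hS.eigenvectorUnitary : Matrix (Fin k) (Fin k) ℝ) = 1 := by
  simpa [star_eq_conjTranspose, conjTranspose_eq_transpose_of_trivial] using
    Unitary.star_mul_self_of_mem hS.eigenvectorUnitary.2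

lemma eq_eigenvectorUnitary_mul_diagonal_mul_transpose :
    S = (hS.eigenvectorUnitary : Matrix (Fin k) (Fin k) ℝ) * diagonal hS.eigenvalues *
      (↑hS.eigenvectorUnitary)ᵀ := by
  simpa [star_eq_conjTranspose, conjTranspose_eq_transpose_of_trivial] using hS.spectral_theorem

lemma trace_mul_mul_transpose {r : ℕ} (M : Matrix (Fin r) (Fin k) ℝ) :
    (M * S * Mᵀ).trace = ∑ i, ∑ j,
      hS.eigenvalues j * (M * (hS.eigenvectorUnitary : Matrix (Fin k) (Fin k) ℝ)) i j ^ 2 := by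
  conv_lhs => rw [hS.eq_eigenvectorUnitary_mul_diagonal_mul_transpose]
  exact trace_mul_conj_diagonal_mul_transpose _ _ _

lemma sInf_eigenvalues_mul_frobSq_le {r : ℕ} (M : Matrix (Fin r) (Fin k) ℝ) :
    sInf (Set.range hS.eigenvalues) * frobSq M ≤ (M * S * Mᵀ).trace := by
  rw [hS.trace_mul_mul_transpose, ← frobSq_mul_of_mul_transpose_eq_one
    hS.eigenvectorUnitary_mul_transpose M, frobSq, Finset.mul_sum]
  refine Finset.sum_le_sum fun i _ => ?_
  rw [Finset.mul_sum]
  exact Finset.sum_le_sum fun j _ => mul_le_mul_of_nonneg_right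
    (csInf_le (Set.finite_range _).bddBelow ⟨j, rfl⟩) (sq_nonneg _)

/-- The orthogonal projection onto the range of `S`. -/
noncomputable def rangeProj : Matrix (Fin k) (Fin k) ℝ :=
  (hS.eigenvectorUnitary : Matrix (Fin k) (Fin k) ℝ) *
    diagonal (fun j => if hS.eigenvalues j = 0 then 0 else 1) * (↑hS.eigenvectorUnitary)ᵀ

lemma rangeProj_transpose : hS.rangeProjᵀ = hS.rangeProj := by
  simp [rangeProj, transpose_mul, Matrix.mul_assoc]

lemma rangeProj_mul_self : hS.rangeProj * hS.rangeProj = hS.rangeProj := by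
  simp only [rangeProj, Matrix.mul_assoc]
  rw [← Matrix.mul_assoc _ (hS.eigenvectorUnitary : Matrix (Fin k) (Fin k) ℝ),
    hS.transpose_eigenvectorUnitary_mul, Matrix.one_mul, ← Matrix.mul_assoc (diagonal _),
    diagonal_mul_diagonal]
  congr 3
  ext j
  split_ifs <;> norm_num

lemma mul_rangeProj : S * hS.rangeProj = S := by
  set U : Matrix (Fin k) (Fin k) ℝ := ↑hS.eigenvectorUnitary
  calc S * hS.rangeProj
      = U * (diagonal hS.eigenvalues * (Uᵀ * U) *
          diagonal (fun j => if hS.eigenvalues j = 0 then 0 else 1)) * Uᵀ := by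
        conv_lhs => enter [1]; rw [hS.eq_eigenvectorUnitary_mul_diagonal_mul_transpose]
        simp only [rangeProj, Matrix.mul_assoc]; rfl
    _ = U * diagonal hS.eigenvalues * Uᵀ := by
        rw [hS.transpose_eigenvectorUnitary_mul, Matrix.mul_one, diagonal_mul_diagonal]
        congr 3
        ext j
        split_ifs with h <;> simp [h]
    _ = S := hS.eq_eigenvectorUnitary_mul_diagonal_mul_transpose.symm

lemma trace_mul_rangeProj_mul_transpose {r : ℕ} (M : Matrix (Fin r) (Fin k) ℝ) :
    (M * hS.rangeProj * Mᵀ).trace = ∑ i, ∑ j, (if hS.eigenvalues j = 0 then 0 else 1) *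
      (M * (hS.eigenvectorUnitary : Matrix (Fin k) (Fin k) ℝ)) i j ^ 2 :=
  trace_mul_conj_diagonal_mul_transpose _ _ _

end Matrix.IsHermitian

section RowSpace

variable {p n : ℕ} (B : Matrix (Fin p) (Fin n) ℝ)

lemma isHermitian_transpose_mul_self_real : (Bᵀ * B).IsHermitian := by
  simpa using isHermitian_conjTranspose_mul_self B

noncomputable def rowSpaceProj : Matrix (Fin n) (Fin n) ℝ :=
  (isHermitian_transpose_mul_self_real B).rangeProj

lemma mul_rowSpaceProj : B * rowSpaceProj B = B := by
  have h : Bᴴ * B * (1 - rowSpaceProj B) = 0 := by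
    rw [Matrix.mul_sub, Matrix.mul_one, conjTranspose_eq_transpose_of_trivial, rowSpaceProj,
      (isHermitian_transpose_mul_self_real B).mul_rangeProj, sub_self]
  rw [conjTranspose_mul_self_mul_eq_zero, Matrix.mul_sub, Matrix.mul_one, sub_eq_zero] at h
  exact h.symm

lemma sigmaSmallSq_mul_frobSq_mul_rowSpaceProj_le {r : ℕ} (M : Matrix (Fin r) (Fin n) ℝ) :
    sigmaSmallSq B * frobSq (M * rowSpaceProj B) ≤ frobSq (M * Bᵀ) := by
  set hB := isHermitian_transpose_mul_self_real B
  have hP : frobSq (M * rowSpaceProj B) = (M * hB.rangeProj * Mᵀ).trace := by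
    rw [frobSq_eq_trace_mul_transpose, transpose_mul, rowSpaceProj, Matrix.mul_assoc,
      ← Matrix.mul_assoc hB.rangeProj, hB.rangeProj_transpose, hB.rangeProj_mul_self,
      Matrix.mul_assoc]
  have hBt : frobSq (M * Bᵀ) = (M * (Bᵀ * B) * Mᵀ).trace := by
    rw [frobSq_eq_trace_mul_transpose, transpose_mul, transpose_transpose]
    simp only [Matrix.mul_assoc]
  rw [hP, hBt, hB.trace_mul_rangeProj_mul_transpose, hB.trace_mul_mul_transpose, Finset.mul_sum]
  refine Finset.sum_le_sum fun i _ => ?_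
  rw [Finset.mul_sum]
  refine Finset.sum_le_sum fun j _ => ?_
  rw [← mul_assoc]
  refine mul_le_mul_of_nonneg_right ?_ (sq_nonneg _)
  split_ifs with h
  · simp [h]
  · rw [mul_one]
    refine csInf_le ((Set.finite_range hB.eigenvalues).subset ?_).bddBelow ⟨⟨j, rfl⟩, h⟩
    rintro t ⟨⟨i, rfl⟩, -⟩
    exact ⟨i, rfl⟩

lemma frobSq_le_frobSq_mul_rowSpaceProj_add {q : ℕ} (C Z : Matrix (Fin q) (Fin p) ℝ)
    (Y : Matrix (Fin q) (Fin n) ℝ) :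
    frobSq (C * B - Y) ≤ frobSq ((C * B - Y) * rowSpaceProj B) + frobSq (Z * B - Y) := by
  set P := rowSpaceProj B
  have hP : Pᵀ = P := (isHermitian_transpose_mul_self_real B).rangeProj_transpose
  have hPP : P * P = P := (isHermitian_transpose_mul_self_real B).rangeProj_mul_self
  have hres : ∀ X : Matrix (Fin q) (Fin p) ℝ, (X * B - Y) - (X * B - Y) * P = Y * P - Y := by
    intro X
    rw [Matrix.sub_mul, Matrix.mul_assoc, mul_rowSpaceProj]
    abel
  have hC := frobSq_eq_frobSq_mul_add_frobSq_sub_mul hP hPP (C * B - Y)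
  have hZ := frobSq_eq_frobSq_mul_add_frobSq_sub_mul hP hPP (Z * B - Y)
  rw [hres] at hC hZ
  linarith [frobSq_nonneg ((Z * B - Y) * P)]

lemma mul_frobSq_sub_sInf_le {q : ℕ} {c : ℝ} (hc : 0 ≤ c) (C : Matrix (Fin q) (Fin p) ℝ)
    (Y : Matrix (Fin q) (Fin n) ℝ) :
    c * frobSq (C * B - Y) - sInf {l : ℝ | ∃ W' : Matrix (Fin q) (Fin p) ℝ,
      l = c * frobSq (W' * B - Y)} ≤ c * frobSq ((C * B - Y) * rowSpaceProj B) := by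
  rw [sub_le_comm]
  refine le_csInf ⟨_, 0, rfl⟩ ?_
  rintro _ ⟨Z, rfl⟩
  have := frobSq_le_frobSq_mul_rowSpaceProj_add B C Z Y
  nlinarith

lemma sigmaSmallSq_nonneg : 0 ≤ sigmaSmallSq B := by
  apply Real.sInf_nonneg
  rintro t ⟨⟨i, rfl⟩, -⟩
  exact eigenvalues_conjTranspose_mul_self_nonneg B i

end RowSpace

lemma sInf_eigenvalues_mul_frobSq_le_frobSq_transpose_mul {a b c : ℕ}
    (R : Matrix (Fin a) (Fin b) ℝ) (X : Matrix (Fin a) (Fin c) ℝ) :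
    sInf (Set.range (isHermitian_mul_conjTranspose_self R).eigenvalues) * frobSq X ≤
      frobSq (Rᵀ * X) := by
  have h := (isHermitian_mul_conjTranspose_self R).sInf_eigenvalues_mul_frobSq_le Xᵀ
  rw [← frobSq_transpose X, ← frobSq_transpose (Rᵀ * X),
    frobSq_eq_trace_mul_transpose (Rᵀ * X)ᵀ]
  simpa only [conjTranspose_eq_transpose_of_trivial, transpose_mul, transpose_transpose,
    Matrix.mul_assoc] using h

lemma sigmaMinSqProd_nonneg (d : ℕ → ℕ) (W : ∀ ℓ, Matrix (Fin (d (ℓ + 1))) (Fin (d ℓ)) ℝ)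
    (H : ℕ) : 0 ≤ sigmaMinSqProd d W H := by
  apply Real.sInf_nonneg
  rintro t ⟨i, rfl⟩
  exact eigenvalues_self_mul_conjTranspose_nonneg _ i

theorem gradient_lower_bound_general (H nbar : ℕ) (d : ℕ → ℕ)
    (B : Matrix (Fin (d 0)) (Fin nbar) ℝ)
    (Y : Matrix (Fin (d (H + 1))) (Fin nbar) ℝ)
    (m : ℕ)
    (W : ∀ ℓ, Matrix (Fin (d (ℓ + 1))) (Fin (d ℓ)) ℝ) :
    (4 / (m : ℝ)) * sigmaMinSqProd d W H * sigmaSmallSq B *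
        ((1 / (m : ℝ)) * frobSq (chainProd d W (H + 1) * B - Y) -
          sInf {l : ℝ | ∃ W' : Matrix (Fin (d (H + 1))) (Fin (d 0)) ℝ,
            l = (1 / (m : ℝ)) * frobSq (W' * B - Y)}) ≤
      frobSq ((2 / (m : ℝ)) •
        ((prodFrom1 d W H)ᵀ * (chainProd d W (H + 1) * B - Y) * Bᵀ)) := by
  have hloss :=
    mul_frobSq_sub_sInf_le B (by positivity : (0 : ℝ) ≤ 1 / m) (chainProd d W (H + 1)) Y
  set E := chainProd d W (H + 1) * B - Y
  have hrow := sigmaSmallSq_mul_frobSq_mul_rowSpaceProj_le B E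
  have hcol :
      sigmaMinSqProd d W H * frobSq (E * Bᵀ) ≤ frobSq ((prodFrom1 d W H)ᵀ * (E * Bᵀ)) :=
    sInf_eigenvalues_mul_frobSq_le_frobSq_transpose_mul _ _
  have hsigmaMin := sigmaMinSqProd_nonneg d W H
  have hsigmaSmall := sigmaSmallSq_nonneg B
  rw [frobSq_smul, Matrix.mul_assoc _ E]
  calc _ ≤ 4 / (m : ℝ) * sigmaMinSqProd d W H * sigmaSmallSq B *
        (1 / m * frobSq (E * rowSpaceProj B)) := by gcongr
    _ = (2 / (m : ℝ)) ^ 2 *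
          (sigmaMinSqProd d W H * (sigmaSmallSq B * frobSq (E * rowSpaceProj B))) := by ring
    _ ≤ (2 / (m : ℝ)) ^ 2 * (sigmaMinSqProd d W H * frobSq (E * Bᵀ)) := by gcongr
    _ ≤ _ := by gcongr

theorem gradient_lower_bound (H nbar : ℕ) (d : ℕ → ℕ)
    (hdim : ∀ ℓ, 1 ≤ ℓ → ℓ ≤ H → d (ℓ + 1) ≤ d ℓ)
    (B : Matrix (Fin (d 0)) (Fin nbar) ℝ)
    (Y : Matrix (Fin (d (H + 1))) (Fin nbar) ℝ)
    (m : ℕ) (hm : m = nbar * d (H + 1))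
    (W : ∀ ℓ, Matrix (Fin (d (ℓ + 1))) (Fin (d ℓ)) ℝ)
    (hrank : ∀ ℓ, 1 ≤ ℓ → ℓ ≤ H → (W ℓ).rank = d (ℓ + 1)) :
    (4 / (m : ℝ)) * sigmaMinSqProd d W H * sigmaSmallSq B *
        ((1 / (m : ℝ)) * frobSq (chainProd d W (H + 1) * B - Y) -
          sInf {l : ℝ | ∃ W' : Matrix (Fin (d (H + 1))) (Fin (d 0)) ℝ,
            l = (1 / (m : ℝ)) * frobSq (W' * B - Y)}) ≤
      frobSq ((2 / (m : ℝ)) •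
        ((prodFrom1 d W H)ᵀ * (chainProd d W (H + 1) * B - Y) * Bᵀ)) :=
  gradient_lower_bound_general H nbar d B Y m W
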